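/- arXiv:math/0602231 — 5 statements merged into one kernel-verified Lean document; each statement's English description precedes it below -/
import Mathlib

section
/- Let m ≥ 3 and n ≥ 1 be integers and let q, l_1, …, l_n be integers such that m does not divide q·l_k for any k. Then there exists ε ∈ {1, −1} such that ∏_{k=1}^{n} (e^{2πi q l_k/m} − 1)^{−1} = ε · (∏_{k=1}^{n} |e^{2πi q l_k/m} − 1|)^{−1} · i^{n} · e^{−πi q (l_1+⋯+l_n)/m}. -/
open Complex Real Finset

private lemma exp_fact (θ : ℂ) : Complex.exp (2*θ*Complex.I) - 1
    = Complex.exp (θ*Complex.I) * (2 * Complex.sin θ * Complex.I) := by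
  rw [Complex.sin]
  have h1 : Complex.exp (θ*Complex.I) * Complex.exp (θ*Complex.I) = Complex.exp (2*θ*Complex.I) := by
    rw [← Complex.exp_add]; ring_nf
  have h2 : Complex.exp (θ*Complex.I) * Complex.exp (-θ*Complex.I) = 1 := by
    rw [← Complex.exp_add]; ring_nf; exact Complex.exp_zero
  linear_combination -h1 + h2 + Complex.exp (θ*Complex.I) * (Complex.exp (θ*Complex.I) - Complex.exp (-θ*Complex.I)) * Complex.I_mul_I

private lemma one_factor (a : ℝ) (hs : Real.sin a ≠ 0) :
    (Complex.exp (2*(a:ℂ)*Complex.I) - 1)⁻¹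
      = (if 0 < Real.sin a then (-1:ℂ) else 1) *
        ((‖Complex.exp (2*(a:ℂ)*Complex.I) - 1‖ : ℂ))⁻¹ *
        Complex.I * Complex.exp (-(a:ℂ)*Complex.I) := by
  have hz : Complex.exp (2*(a:ℂ)*Complex.I) - 1
      = Complex.exp ((a:ℂ)*Complex.I) * (2 * (Real.sin a : ℂ) * Complex.I) := by
    rw [exp_fact, Complex.ofReal_sin]
  rw [hz]
  have habs : (‖Complex.exp ((a:ℂ)*Complex.I) * (2 * (Real.sin a : ℂ) * Complex.I)‖ : ℝ) = 2 * |Real.sin a| := by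
    rw [norm_mul, Complex.norm_exp_ofReal_mul_I, one_mul, norm_mul, norm_mul,
      Complex.norm_two, Complex.norm_real, Real.norm_eq_abs, Complex.norm_I, mul_one]
  rw [habs]
  have hexp : Complex.exp ((a:ℂ)*Complex.I) ≠ 0 := Complex.exp_ne_zero _
  have hexp' : Complex.exp (-(a:ℂ)*Complex.I) = (Complex.exp ((a:ℂ)*Complex.I))⁻¹ := by
    rw [← Complex.exp_neg]; ring_nf
  have hsC : ((Real.sin a : ℂ)) ≠ 0 := by exact_mod_cast hs
  rcases lt_or_gt_of_ne hs with hneg | hpos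
  · rw [if_neg (by linarith), abs_of_neg hneg, hexp']
    have hc : ((2 * -Real.sin a : ℝ) : ℂ) = -(2 * (Real.sin a : ℂ)) := by push_cast; ring
    rw [hc]
    simp only [one_mul, mul_inv, Complex.inv_I, neg_inv]
    ring
  · rw [if_pos hpos, abs_of_pos hpos, hexp']
    have hc : ((2 * Real.sin a : ℝ) : ℂ) = 2 * (Real.sin a : ℂ) := by norm_cast
    rw [hc]
    simp only [mul_inv, Complex.inv_I, neg_inv]
    ring

/-- Proposition 6.5 of the paper: the homological Turaev torsion identity for lens spaces.
If `m ≥ 3`, `n ≥ 1`, and `m ∤ q·l_k` for all `k`, then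
`∏_k (e^{2πi q l_k/m} − 1)^{−1}
  = ± (∏_k |e^{2πi q l_k/m} − 1|)^{−1} · i^n · e^{−πi q (Σ l_k)/m}`. -/
theorem stmt_2 (m n : ℕ) (hm : 3 ≤ m) (hn : 1 ≤ n) (q : ℤ) (l : Fin n → ℤ)
    (h : ∀ k, ¬ ((m : ℤ) ∣ q * l k)) :
    ∃ ε : ℂ, (ε = 1 ∨ ε = -1) ∧
      ∏ k, (Complex.exp (2 * Real.pi * Complex.I * (q : ℂ) * (l k : ℂ) / (m : ℂ)) - 1)⁻¹ =
        ε * ((∏ k, (‖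
            Complex.exp (2 * Real.pi * Complex.I * (q : ℂ) * (l k : ℂ) / (m : ℂ)) - 1‖ : ℂ))⁻¹) *
          Complex.I ^ n *
          Complex.exp (-(Real.pi : ℂ) * Complex.I * (q : ℂ) * (∑ k, (l k : ℂ)) / (m : ℂ)) := by
  have hm0 : (m:ℝ) ≠ 0 := by positivity
  set a : Fin n → ℝ := fun k => π * q * l k / m with ha
  have harg : ∀ k, (2 * (Real.pi:ℂ) * Complex.I * (q : ℂ) * (l k : ℂ) / (m : ℂ))
      = 2 * ((a k : ℝ) : ℂ) * Complex.I := by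
    intro k; simp only [ha]; push_cast; ring
  have hs : ∀ k, Real.sin (a k) ≠ 0 := by
    intro k hsin
    rw [Real.sin_eq_zero_iff] at hsin
    obtain ⟨j, hj⟩ := hsin
    apply h k
    have hπ : (π:ℝ) ≠ 0 := Real.pi_ne_zero
    have hr : (j:ℝ) * m = q * l k := by
      simp only [ha] at hj
      field_simp at hj
      have := mul_left_cancel₀ hπ (show π * ((j:ℝ)*m) = π * ((q:ℝ) * l k) by linear_combination π * hj)
      linarith
    have hz : (j:ℤ) * m = q * l k := by exact_mod_cast hr
    exact ⟨j, by linarith⟩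
  have key : ∀ k ∈ (univ : Finset (Fin n)),
      (Complex.exp (2 * Real.pi * Complex.I * (q : ℂ) * (l k : ℂ) / (m : ℂ)) - 1)⁻¹
      = (if 0 < Real.sin (a k) then (-1:ℂ) else 1) *
        ((‖Complex.exp (2 * Real.pi * Complex.I * (q : ℂ) * (l k : ℂ) / (m : ℂ)) - 1‖ : ℂ))⁻¹ *
        Complex.I * Complex.exp (-(a k:ℂ)*Complex.I) := by
    intro k _
    rw [harg k]
    exact one_factor (a k) (hs k)
  rw [Finset.prod_congr rfl key]
  simp only [Finset.prod_mul_distrib, Finset.prod_const, Finset.card_univ, Fintype.card_fin]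
  refine ⟨∏ k, (if 0 < Real.sin (a k) then (-1:ℂ) else 1), ?_, ?_⟩
  · refine Finset.prod_induction _ (fun x => x = 1 ∨ x = -1) ?_ (Or.inl rfl) ?_
    · rintro x y (rfl | rfl) (rfl | rfl) <;> norm_num
    · intro k _; split <;> simp
  · rw [Finset.prod_inv_distrib, ← Complex.exp_sum]
    have hsum : (∑ k, -(a k : ℂ) * Complex.I)
        = -(Real.pi : ℂ) * Complex.I * (q : ℂ) * (∑ k, (l k : ℂ)) / (m : ℂ) := by
      have hterm : ∀ k ∈ (univ : Finset (Fin n)), -(a k : ℂ) * Complex.I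
          = (-(Real.pi:ℂ) * Complex.I * (q:ℂ) / (m:ℂ)) * (l k : ℂ) := by
        intro k _; simp only [ha]; push_cast; ring
      rw [Finset.sum_congr rfl hterm, ← Finset.mul_sum]
      ring
    rw [hsum]
end

section
/- Let m ≥ 2 and n ≥ 1 be integers, let q be an integer, and let p_1, …, p_n be integers each coprime to m. Then the complex number i^{−n} · ∑_{l=1}^{m−1} e^{2πilq/m} · ∏_{j=1}^{n} cot(πlp_j/m) is real, i.e. its imaginary part is zero. -/
open Complex Real Finset ComplexConjugate

/-!
Complex conjugation sends the summand at `l` to `(-1)^n` times the summand at `m - l`: the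
exponential is conjugated by `l ↦ m - l` because `e^{2πiq} = 1`, and each `cot(π l p_j / m)`
changes sign because `cot` is odd and `π`-periodic. Summing over the reflection-invariant
range `1 ≤ l ≤ m - 1` and using `conj (i^{-n}) = (-1)^n i^{-n}` shows the whole expression is
fixed by conjugation.
-/

theorem Real.cot_intCast_mul_pi_sub (k : ℤ) (x : ℝ) : cot (k * π - x) = -cot x := by
  rw [cot_eq_cos_div_sin, cot_eq_cos_div_sin, cos_int_mul_pi_sub, sin_int_mul_pi_sub]
  rcases Int.even_or_odd k with hk | hk <;> rw [hk.neg_one_zpow] <;> ring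

theorem Complex.conj_I_zpow_neg_natCast (n : ℕ) :
    conj (I ^ (-(n : ℤ))) = (-1) ^ n * I ^ (-(n : ℤ)) := by
  rw [map_zpow₀, conj_I, neg_eq_neg_one_mul, mul_zpow, zpow_neg, zpow_natCast, ← inv_pow,
    inv_neg_one]

theorem Finset.sum_Icc_one_sub_reflect {M : Type*} [AddCommMonoid M] (f : ℕ → M) (m : ℕ) :
    ∑ l ∈ Icc 1 (m - 1), f (m - l) = ∑ l ∈ Icc 1 (m - 1), f l := by
  refine sum_nbij' (m - ·) (m - ·) ?_ ?_ ?_ ?_ fun _ _ ↦ rfl <;>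
    (intro _ h; simp only [mem_Icc] at *; omega)

theorem Complex.im_I_zpow_neg_mul_sum_Icc_eq_zero {m n : ℕ} {f : ℕ → ℂ}
    (hf : ∀ l ∈ Icc 1 (m - 1), conj (f l) = (-1) ^ n * f (m - l)) :
    (I ^ (-(n : ℤ)) * ∑ l ∈ Icc 1 (m - 1), f l).im = 0 := by
  rw [← conj_eq_iff_im, map_mul, map_sum, sum_congr rfl hf, ← mul_sum, sum_Icc_one_sub_reflect,
    conj_I_zpow_neg_natCast, mul_mul_mul_comm, ← pow_add, Even.neg_one_pow ⟨n, rfl⟩, one_mul]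

theorem Complex.exp_two_pi_I_mul_natCast_sub {m l : ℕ} (hlm : l ≤ m) (hm : m ≠ 0) (q : ℤ) :
    exp (2 * π * I * ((m - l : ℕ) : ℂ) * q / m) = conj (exp (2 * π * I * l * q / m)) := by
  have hsplit :
      2 * π * I * ((m - l : ℕ) : ℂ) * q / m = q * (2 * π * I) + -(2 * π * I * l * q / m) := by
    push_cast [hlm]
    field_simp
    ring
  rw [hsplit, exp_add, exp_int_mul_two_pi_mul_I, one_mul, ← exp_conj]
  simp only [map_div₀, map_mul, conj_I, conj_ofReal, map_ofNat, map_intCast, map_natCast]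
  ring_nf

theorem Real.cot_pi_mul_natCast_sub {m l : ℕ} (hlm : l ≤ m) (hm : m ≠ 0) (p : ℤ) :
    cot (π * ((m - l : ℕ) : ℝ) * p / m) = -cot (π * l * p / m) := by
  have hsplit : π * ((m - l : ℕ) : ℝ) * p / m = p * π - π * l * p / m := by
    push_cast [hlm]
    field_simp
  rw [hsplit, cot_intCast_mul_pi_sub]

theorem stmt_7_general (m n : ℕ) (q : ℤ)
    (p : Fin n → ℤ) :
    (Complex.I ^ (-(n : ℤ)) *
      ∑ l ∈ Finset.Icc 1 (m - 1),
        Complex.exp (2 * Real.pi * Complex.I * (l : ℂ) * (q : ℂ) / (m : ℂ)) *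
          ∏ j, (Real.cot (Real.pi * (l : ℝ) * (p j : ℝ) / (m : ℝ)) : ℂ)).im = 0 := by
  refine im_I_zpow_neg_mul_sum_Icc_eq_zero fun l hl ↦ ?_
  have hlm : l ≤ m := by simp only [mem_Icc] at hl; omega
  have hm : m ≠ 0 := by simp only [mem_Icc] at hl; omega
  simp only [map_mul, map_prod, conj_ofReal, exp_two_pi_I_mul_natCast_sub hlm hm,
    cot_pi_mul_natCast_sub hlm hm, ofReal_neg, prod_neg, card_univ, Fintype.card_fin]
  rw [mul_left_comm, ← mul_assoc ((-1 : ℂ) ^ n), ← pow_add, Even.neg_one_pow ⟨n, rfl⟩, one_mul]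

/-- The eta invariant of a lens space is real (Proposition 5.4):
`i^{−n} · ∑_{l=1}^{m−1} e^{2πilq/m} ∏_j cot(πlp_j/m)` has zero imaginary part. -/
theorem stmt_7 (m n : ℕ) (hm : 2 ≤ m) (hn : 1 ≤ n) (q : ℤ)
    (p : Fin n → ℤ) (hp : ∀ j, IsCoprime (p j) (m : ℤ)) :
    (Complex.I ^ (-(n : ℤ)) *
      ∑ l ∈ Finset.Icc 1 (m - 1),
        Complex.exp (2 * Real.pi * Complex.I * (l : ℂ) * (q : ℂ) / (m : ℂ)) *
          ∏ j, (Real.cot (Real.pi * (l : ℝ) * (p j : ℝ) / (m : ℝ)) : ℂ)).im = 0 :=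
  stmt_7_general m n q p
end

section
/- Define θ_1 := −π·[(−1/10)·∑_{l=1}^{4} cos(2πl/5)·cot²(πl/5) − (−1/10)·∑_{l=1}^{4} cot²(πl/5)] and θ_2 := −π·[(−1/10)·∑_{l=1}^{4} cos(4πl/5)·cot²(πl/5) − (−1/10)·∑_{l=1}^{4} cot²(πl/5)]. Then there is NO integer k with θ_1 = θ_2 + kπ (indeed θ_1 − θ_2 = 2π/5). -/
open Real Finset

set_option maxHeartbeats 1000000

/-- The constants `θ^{α_1}` and `θ^{α_2}` for `L(5;1,1)` are not congruent mod `π`: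
there is no integer `k` with `θ_1 = θ_2 + kπ`; indeed `θ_1 − θ_2 = 2π/5`. -/
theorem stmt_14
    (θ₁ θ₂ : ℝ)
    (hθ₁ : θ₁ = -Real.pi *
      ((-1 / 10) * ∑ l ∈ Finset.Icc (1 : ℕ) 4,
          Real.cos (2 * Real.pi * (l : ℝ) / 5) * (Real.cot (Real.pi * (l : ℝ) / 5)) ^ 2 -
        (-1 / 10) * ∑ l ∈ Finset.Icc (1 : ℕ) 4, (Real.cot (Real.pi * (l : ℝ) / 5)) ^ 2))
    (hθ₂ : θ₂ = -Real.pi *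
      ((-1 / 10) * ∑ l ∈ Finset.Icc (1 : ℕ) 4,
          Real.cos (4 * Real.pi * (l : ℝ) / 5) * (Real.cot (Real.pi * (l : ℝ) / 5)) ^ 2 -
        (-1 / 10) * ∑ l ∈ Finset.Icc (1 : ℕ) 4, (Real.cot (Real.pi * (l : ℝ) / 5)) ^ 2)) :
    (¬ ∃ k : ℤ, θ₁ = θ₂ + (k : ℝ) * Real.pi) ∧ θ₁ - θ₂ = 2 * Real.pi / 5 := by
  set a := Real.sqrt 5 with ha
  have h5 : a ^ 2 = 5 := Real.sq_sqrt (by norm_num)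
  have ha0 : 0 ≤ a := Real.sqrt_nonneg 5
  have ha5 : a < 5 := by nlinarith
  have hpi := Real.pi_pos
  -- cosine values
  have e1 : Real.cos (π / 5) = (1 + a) / 4 := Real.cos_pi_div_five
  have e2 : Real.cos (2 * π / 5) = (a - 1) / 4 := by
    have h := Real.cos_two_mul (π / 5)
    rw [show 2 * (π / 5) = 2 * π / 5 by ring, e1] at h
    nlinarith
  have e3 : Real.cos (3 * π / 5) = -((a - 1) / 4) := by
    rw [show (3 : ℝ) * π / 5 = π - 2 * π / 5 by ring, Real.cos_pi_sub, e2]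
  have e4 : Real.cos (4 * π / 5) = -((1 + a) / 4) := by
    rw [show (4 : ℝ) * π / 5 = π - π / 5 by ring, Real.cos_pi_sub, e1]
  have e6 : Real.cos (6 * π / 5) = -((1 + a) / 4) := by
    rw [show (6 : ℝ) * π / 5 = 2 * π - 4 * π / 5 by ring, Real.cos_two_pi_sub, e4]
  have e8 : Real.cos (8 * π / 5) = (a - 1) / 4 := by
    rw [show (8 : ℝ) * π / 5 = 2 * π - 2 * π / 5 by ring, Real.cos_two_pi_sub, e2]
  have e12 : Real.cos (12 * π / 5) = (a - 1) / 4 := by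
    rw [show (12 : ℝ) * π / 5 = 2 * π / 5 + 2 * π by ring, Real.cos_add_two_pi, e2]
  have e16 : Real.cos (16 * π / 5) = -((1 + a) / 4) := by
    rw [show (16 : ℝ) * π / 5 = 6 * π / 5 + 2 * π by ring, Real.cos_add_two_pi, e6]
  -- sine squares
  have hs1 : Real.sin (π / 5) ^ 2 = (5 - a) / 8 := by
    have h := Real.sin_sq (π / 5); rw [e1] at h; nlinarith
  have hs2 : Real.sin (2 * π / 5) ^ 2 = (5 + a) / 8 := by
    have h := Real.sin_sq (2 * π / 5); rw [e2] at h; nlinarith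
  have hs3 : Real.sin (3 * π / 5) = Real.sin (2 * π / 5) := by
    rw [show (3 : ℝ) * π / 5 = π - 2 * π / 5 by ring, Real.sin_pi_sub]
  have hs4 : Real.sin (4 * π / 5) = Real.sin (π / 5) := by
    rw [show (4 : ℝ) * π / 5 = π - π / 5 by ring, Real.sin_pi_sub]
  have hm : (5:ℝ) - a ≠ 0 := ne_of_gt (by nlinarith)
  have hp : (5:ℝ) + a ≠ 0 := ne_of_gt (by nlinarith)
  have hcot : ∀ x : ℝ, Real.cot x ^ 2 = Real.cos x ^ 2 / Real.sin x ^ 2 := by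
    intro x; rw [Real.cot_eq_cos_div_sin, div_pow]
  -- cot squared values
  have hT1 : Real.cot (π / 5) ^ 2 = 1 + 2 * a / 5 := by
    rw [hcot, e1, hs1]; field_simp; nlinarith [sq_nonneg a]
  have hT2 : Real.cot (2 * π / 5) ^ 2 = 1 - 2 * a / 5 := by
    rw [hcot, e2, hs2]; field_simp; nlinarith [sq_nonneg a]
  have hT3 : Real.cot (3 * π / 5) ^ 2 = 1 - 2 * a / 5 := by
    rw [hcot, e3, hs3, hs2, neg_pow]
    rw [hcot, e2, hs2] at hT2
    simpa using hT2
  have hT4 : Real.cot (4 * π / 5) ^ 2 = 1 + 2 * a / 5 := by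
    rw [hcot, e4, hs4, hs1, neg_pow]
    rw [hcot, e1, hs1] at hT1
    simpa using hT1
  -- expand the sums
  have hIcc : Finset.Icc (1:ℕ) 4 = {1,2,3,4} := rfl
  rw [hIcc] at hθ₁ hθ₂
  norm_num [Finset.sum_insert, Finset.mem_insert, Finset.mem_singleton] at hθ₁ hθ₂
  rw [show (2:ℝ) * π * 2 / 5 = 4 * π / 5 by ring,
      show (2:ℝ) * π * 3 / 5 = 6 * π / 5 by ring, show (2:ℝ) * π * 4 / 5 = 8 * π / 5 by ring,
      show π * 2 / 5 = 2 * π / 5 by ring,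
      show π * 3 / 5 = 3 * π / 5 by ring, show π * 4 / 5 = 4 * π / 5 by ring,
      e2, e4, e6, e8, hT1, hT2, hT3, hT4] at hθ₁
  rw [show (4:ℝ) * π * 2 / 5 = 8 * π / 5 by ring,
      show (4:ℝ) * π * 3 / 5 = 12 * π / 5 by ring, show (4:ℝ) * π * 4 / 5 = 16 * π / 5 by ring,
      show π * 2 / 5 = 2 * π / 5 by ring,
      show π * 3 / 5 = 3 * π / 5 by ring, show π * 4 / 5 = 4 * π / 5 by ring,
      e4, e8, e12, e16, hT1, hT2, hT3, hT4] at hθ₂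
  have hdiff : θ₁ - θ₂ = 2 * π / 5 := by
    rw [hθ₁, hθ₂]; linear_combination (2 * π / 25) * h5
  refine ⟨?_, hdiff⟩
  rintro ⟨k, hk⟩
  have hk' : (k : ℝ) * π = 2 * π / 5 := by linarith [hdiff, hk]
  have : (k : ℝ) = 2 / 5 := by
    field_simp at hk'
    have := Real.pi_ne_zero
    nlinarith [hk']
  have h2 : (5 : ℝ) * k = 2 := by linarith
  have : (5 * k : ℤ) = 2 := by exact_mod_cast h2
  omega
end

section
/- For q ∈ {1,2} and s ∈ {0,1,2} define the complex number R(q,s) := i^{−3} · e^{πiq(3−2s)/3} · exp( (π/6)·∑_{l=1}^{2} e^{2πilq/3}·cot³(πl/3) ) · exp( −(π/6)·∑_{l=1}^{2} cot³(πl/3) ). Then R(2,0) = −e^{−5πi/9}, R(2,1) = e^{−8πi/9}, and R(2,2) = e^{−2πi/9}. -/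
/-!
Since `cot (2π/3) = -cot (π/3)`, the untwisted sum of cubes vanishes and the twisted one is
`cot³(π/3) (ω^q - ω^{-q}) = (2√3/9) i sin (2πq/3)` with `ω = e^{2πi/3}`. Together with
`i^{-3} = i = e^{πi/2}`, this makes `R(2,s) = e^{(22 - 12s)πi/9}`, and the three values are
read off modulo `2πi`.
-/

open Complex Real Finset

/-- The ratio `R(q,s)` of the refined analytic torsion and the cohomological Turaev
torsion (up to sign) of the lens space `L(3;1,1,1)`. -/
noncomputable def lensRatio (q s : ℕ) : ℂ :=
  Complex.I ^ (-3 : ℤ) *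
    Complex.exp (Real.pi * Complex.I * (q : ℂ) * (3 - 2 * (s : ℂ)) / 3) *
    Complex.exp ((Real.pi / 6 : ℂ) *
      ∑ l ∈ Finset.Icc (1 : ℕ) 2,
        Complex.exp (2 * Real.pi * Complex.I * (l : ℂ) * (q : ℂ) / 3) *
          (Real.cot (Real.pi * (l : ℝ) / 3) : ℂ) ^ 3) *
    Complex.exp (-(Real.pi / 6 : ℂ) *
      ∑ l ∈ Finset.Icc (1 : ℕ) 2, (Real.cot (Real.pi * (l : ℝ) / 3) : ℂ) ^ 3)

namespace Real

theorem cot_pi_sub (x : ℝ) : cot (π - x) = -cot x := by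
  rw [cot_eq_cos_div_sin, cot_eq_cos_div_sin, cos_pi_sub, sin_pi_sub, neg_div]

theorem cot_pi_div_two : cot (π / 2) = 0 := by
  rw [cot_eq_cos_div_sin, cos_pi_div_two, zero_div]

theorem cot_pi_div_three : cot (π / 3) = √3 / 3 := by
  have h3 : √3 ≠ 0 := by positivity
  rw [cot_eq_cos_div_sin, cos_pi_div_three, sin_pi_div_three]
  field_simp
  rw [sq_sqrt zero_le_three]

end Real

/-- The reflection `l ↦ n - l` sends `cot (π l / n)` to its negative, so odd powers cancel in
pairs; the fixed point `2 l = n` contributes `cot (π / 2) = 0`. -/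
theorem sum_cot_pow_eq_zero {n k : ℕ} (hk : Odd k) :
    ∑ l ∈ Icc 1 (n - 1), Real.cot (π * l / n) ^ k = 0 := by
  have hrefl : ∀ l ∈ Icc 1 (n - 1), Real.cot (π * ↑(n - l) / n) = -Real.cot (π * l / n) := by
    intro l hl
    rw [mem_Icc] at hl
    have hn : (n : ℝ) ≠ 0 := by norm_cast; omega
    rw [Nat.cast_sub (by omega), ← Real.cot_pi_sub]
    congr 1
    field_simp
  refine sum_involution (fun l _ ↦ n - l) (fun l hl ↦ ?_) (fun l hl hne hfix ↦ hne ?_)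
    (fun l hl ↦ by rw [mem_Icc] at hl ⊢; omega) (fun l hl ↦ by rw [mem_Icc] at hl; omega)
  · rw [hrefl l hl, hk.neg_pow, add_neg_cancel]
  · have hl' := mem_Icc.1 hl
    have h2 : (n : ℝ) = 2 * l := by norm_cast; omega
    have hl0 : (l : ℝ) ≠ 0 := by norm_cast; omega
    rw [show π * l / n = π / 2 by rw [h2]; field_simp, Real.cot_pi_div_two,
      zero_pow hk.pos.ne']

theorem sum_exp_mul_cot_pi_div_three_pow_three (q : ℕ) :
    ∑ l ∈ Icc (1 : ℕ) 2, exp (2 * π * I * (l : ℂ) * q / 3) * (Real.cot (π * (l : ℝ) / 3) : ℂ) ^ 3 =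
      2 * √3 / 9 * Complex.sin (2 * π * q / 3) * I := by
  set x : ℂ := 2 * π * q / 3
  have hcot₁ : Real.cot (π * (1 : ℕ) / 3) = √3 / 3 := by
    rw [Nat.cast_one, mul_one, Real.cot_pi_div_three]
  have hcot₂ : Real.cot (π * (2 : ℕ) / 3) = -(√3 / 3) := by
    rw [Nat.cast_ofNat, show π * 2 / 3 = π - π / 3 by ring, Real.cot_pi_sub, Real.cot_pi_div_three]
  have hexp₁ : exp (2 * π * I * (1 : ℕ) * q / 3) = exp (x * I) := by
    congr 1; push_cast; ring
  have hexp₂ : exp (2 * π * I * (2 : ℕ) * q / 3) = exp (-x * I) := by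
    rw [exp_eq_exp_iff_exists_int]
    exact ⟨q, by push_cast; ring⟩
  have hsqrt : ((√3 : ℝ) : ℂ) ^ 2 = 3 := by norm_cast; simp
  rw [show Icc (1 : ℕ) 2 = {1, 2} from rfl, sum_pair (by norm_num), hcot₁, hcot₂, hexp₁, hexp₂]
  push_cast
  linear_combination (√3 / 27 * (exp (x * I) - exp (-x * I))) * hsqrt - √3 / 9 * I * two_sin x
    + √3 / 9 * (exp (x * I) - exp (-x * I)) * I_sq

theorem lensRatio_eq (q s : ℕ) :
    lensRatio q s = exp (π / 2 * I + π * I * q * (3 - 2 * s) / 3 +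
      π * √3 / 27 * Complex.sin (2 * π * q / 3) * I) := by
  have hcot : ∑ l ∈ Icc (1 : ℕ) 2, (Real.cot (π * (l : ℝ) / 3) : ℂ) ^ 3 = 0 := by
    exact_mod_cast sum_cot_pow_eq_zero (n := 3) (by decide : Odd 3)
  have hI : I ^ (-3 : ℤ) = I := by rw [I_zpow_eq_zpow_mod]; norm_num
  rw [lensRatio, hI, sum_exp_mul_cot_pi_div_three_pow_three, hcot, mul_zero, Complex.exp_zero,
    mul_one]
  nth_rw 1 [← exp_pi_div_two_mul_I]
  rw [← Complex.exp_add, ← Complex.exp_add]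
  congr 1
  ring

theorem lensRatio_two (s : ℕ) : lensRatio 2 s = exp ((22 - 12 * s) * π * I / 9) := by
  have hsin : Complex.sin (2 * π * (2 : ℕ) / 3) = -(√3 / 2) := by
    rw [show (2 * π * (2 : ℕ) / 3 : ℂ) = ((π / 3 : ℝ) : ℂ) + π by push_cast; ring,
      Complex.sin_add_pi, ← ofReal_sin, Real.sin_pi_div_three]
    push_cast; rfl
  have hsqrt : ((√3 : ℝ) : ℂ) ^ 2 = 3 := by norm_cast; simp
  rw [lensRatio_eq, hsin]
  congr 1
  linear_combination (-π * I / 54) * hsqrt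

/-- The `q = 2` row of the table in Subsection 6.7:
`R(2,0) = −e^{−5πi/9}`, `R(2,1) = e^{−8πi/9}`, `R(2,2) = e^{−2πi/9}`. -/
theorem stmt_18 :
    lensRatio 2 0 = -Complex.exp (-(5 * Real.pi * Complex.I) / 9) ∧
    lensRatio 2 1 = Complex.exp (-(8 * Real.pi * Complex.I) / 9) ∧
    lensRatio 2 2 = Complex.exp (-(2 * Real.pi * Complex.I) / 9) := by
  refine ⟨?_, ?_, ?_⟩ <;> rw [lensRatio_two]
  · rw [← mul_neg_one, ← exp_pi_mul_I, ← Complex.exp_add, exp_eq_exp_iff_exists_int]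
    exact ⟨1, by push_cast; ring⟩
  · rw [exp_eq_exp_iff_exists_int]
    exact ⟨1, by push_cast; ring⟩
  · congr 1
    push_cast
    ring
end

section
/- For q ∈ {1,2} and s ∈ {0,1,2} define the complex number R(q,s) := i^{−3} · e^{πiq(3−2s)/3} · exp( (π/6)·∑_{l=1}^{2} e^{2πilq/3}·cot³(πl/3) ) · exp( −(π/6)·∑_{l=1}^{2} cot³(πl/3) ). Then for every q ∈ {1,2} and every s ∈ {0,1,2}, R(q,s) ≠ 1 and R(q,s) ≠ −1 (equivalently, R(q,s)² ≠ 1). -/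
open Complex Real Finset

/-
The cotangents are `cot (π/3) = 1/√3` and `cot (2π/3) = -1/√3`, so the untwisted sum of cubes
vanishes and, with `ω = exp (2πi/3)`, the twisted one is `(ω^q - ω^(2q)) / (3√3) = ±i/3` since
`ω - ω² = i√3` and `ω³ = 1`. Together with `i⁻³ = exp (πi/2)` this gives
`R(q,s) = exp (πi a / 18)` with `a = 9 + 6q(3 - 2s) ± 1 ∈ {28, 16, 4, 44, 20, -4}`.
As `exp (2πi/18)` is a primitive 18th root of unity, `R(q,s)² = 1` would force `18 ∣ a`.
-/

lemma Real.cot_pi_div_three_s19 : cot (π / 3) = (√3)⁻¹ := by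
  rw [← tan_inv_eq_cot, tan_pi_div_three]

lemma Real.cot_two_pi_div_three : cot (2 * π / 3) = -(√3)⁻¹ := by
  rw [show 2 * π / 3 = π - π / 3 by ring, ← tan_inv_eq_cot, tan_pi_sub, tan_pi_div_three,
    inv_neg]

lemma sum_Icc_one_two {M : Type*} [AddCommMonoid M] (f : ℕ → M) :
    ∑ l ∈ Icc 1 2, f l = f 1 + f 2 :=
  sum_pair (by norm_num : (1 : ℕ) ≠ 2)

lemma cot_pi_mul_one_div_three : Real.cot (π * (1 : ℕ) / 3) = (√3)⁻¹ := by
  rw [Nat.cast_one, mul_one, Real.cot_pi_div_three_s19]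

lemma cot_pi_mul_two_div_three : Real.cot (π * (2 : ℕ) / 3) = -(√3)⁻¹ := by
  rw [Nat.cast_ofNat, mul_comm, Real.cot_two_pi_div_three]

lemma sum_cot_pi_mul_div_three_pow_three_eq_zero :
    ∑ l ∈ Icc (1 : ℕ) 2, (Real.cot (π * l / 3) : ℂ) ^ 3 = 0 := by
  rw [sum_Icc_one_two, cot_pi_mul_one_div_three, cot_pi_mul_two_div_three]
  push_cast
  ring

lemma Complex.ofReal_sqrt_three_sq : (√3 : ℂ) ^ 2 = 3 := by
  rw [← ofReal_pow, Real.sq_sqrt (by norm_num)]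
  norm_num

lemma Complex.exp_two_pi_div_three_mul_I : exp (2 * π / 3 * I) = -1 / 2 + √3 / 2 * I := by
  have hangle : 2 * π / 3 = π - π / 3 := by ring
  have hcast : (2 * π / 3 * I : ℂ) = ((2 * π / 3 : ℝ) : ℂ) * I := by push_cast; ring
  rw [hcast, exp_mul_I, ← ofReal_cos, ← ofReal_sin, hangle, Real.cos_pi_sub, Real.sin_pi_sub,
    cos_pi_div_three, sin_pi_div_three]
  push_cast
  ring

lemma Complex.exp_two_pi_div_three_mul_I_pow_three : exp (2 * π / 3 * I) ^ 3 = 1 := by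
  rw [← Complex.exp_nat_mul, ← Complex.exp_two_pi_mul_I]
  push_cast
  ring_nf

lemma Complex.exp_two_pi_div_three_mul_I_sub_sq :
    exp (2 * π / 3 * I) - exp (2 * π / 3 * I) ^ 2 = √3 * I := by
  rw [Complex.exp_two_pi_div_three_mul_I]
  linear_combination (-I ^ 2 / 4) * Complex.ofReal_sqrt_three_sq + (-3 / 4) * I_sq

noncomputable def twistedCotCubeSum (q : ℕ) : ℂ :=
  ∑ l ∈ Icc (1 : ℕ) 2, exp (2 * π * I * l * q / 3) * (Real.cot (π * l / 3) : ℂ) ^ 3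

lemma twistedCotCubeSum_eq (q : ℕ) :
    twistedCotCubeSum q =
      (√3 : ℂ)⁻¹ ^ 3 * (exp (2 * π / 3 * I) ^ q - exp (2 * π / 3 * I) ^ (2 * q)) := by
  rw [twistedCotCubeSum, sum_Icc_one_two, cot_pi_mul_one_div_three, cot_pi_mul_two_div_three,
    ← Complex.exp_nat_mul, ← Complex.exp_nat_mul]
  push_cast
  ring_nf

lemma twistedCotCubeSum_eq_of_sub_sq (q : ℕ) (ε : ℤ)
    (h : exp (2 * π / 3 * I) ^ q - exp (2 * π / 3 * I) ^ (2 * q) = ε * (√3 * I)) :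
    twistedCotCubeSum q = ε * I / 3 := by
  have h3 : (√3 : ℂ) ≠ 0 := by norm_num
  rw [twistedCotCubeSum_eq, h, ← Complex.ofReal_sqrt_three_sq]
  field_simp

lemma twistedCotCubeSum_one : twistedCotCubeSum 1 = (1 : ℤ) * I / 3 :=
  twistedCotCubeSum_eq_of_sub_sq 1 1 (by
    rw [pow_one, Complex.exp_two_pi_div_three_mul_I_sub_sq, Int.cast_one, one_mul])

lemma twistedCotCubeSum_two : twistedCotCubeSum 2 = (-1 : ℤ) * I / 3 :=
  twistedCotCubeSum_eq_of_sub_sq 2 (-1) (by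
    push_cast
    linear_combination (-exp (2 * π / 3 * I)) * Complex.exp_two_pi_div_three_mul_I_pow_three -
      Complex.exp_two_pi_div_three_mul_I_sub_sq)

lemma Complex.I_zpow_neg_three : I ^ (-3 : ℤ) = exp (π / 2 * I) := by
  rw [exp_pi_div_two_mul_I, I_zpow_eq_zpow_mod]
  norm_num

lemma lensRatio_eq_exp (q s : ℕ) (ε : ℤ) (hε : twistedCotCubeSum q = ε * I / 3) :
    lensRatio q s = exp ((9 + 6 * q * (3 - 2 * s) + ε : ℤ) * (π * I / 18)) := by
  rw [lensRatio, ← twistedCotCubeSum, hε, sum_cot_pi_mul_div_three_pow_three_eq_zero,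
    Complex.I_zpow_neg_three, ← Complex.exp_add, ← Complex.exp_add, ← Complex.exp_add]
  push_cast
  ring_nf

lemma Complex.exp_int_mul_pi_mul_I_div_eq_one_or_eq_neg_one_iff (a : ℤ) {n : ℕ} (hn : n ≠ 0) :
    exp (a * (π * I / n)) = 1 ∨ exp (a * (π * I / n)) = -1 ↔ (n : ℤ) ∣ a := by
  have hroot := Complex.isPrimitiveRoot_exp n hn
  have hsq : exp (a * (π * I / n)) ^ 2 = exp (2 * π * I / n) ^ a := by
    rw [← Complex.exp_nat_mul, ← Complex.exp_int_mul]
    congr 1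
    push_cast
    field_simp
  rw [← sq_eq_one_iff, hsq, hroot.zpow_eq_one_iff_dvd]

/-- Subsection 6.8 of the paper: for every `q ∈ {1,2}` and `s ∈ {0,1,2}`,
`R(q,s) ≠ 1` and `R(q,s) ≠ −1`; hence the refined analytic torsion and the
cohomological Turaev torsion of `L(3;1,1,1)` are never equal. -/
theorem stmt_19 :
    ∀ q ∈ ({1, 2} : Finset ℕ), ∀ s ∈ ({0, 1, 2} : Finset ℕ),
      lensRatio q s ≠ 1 ∧ lensRatio q s ≠ -1 := by
  intro q hq s hs
  obtain ⟨ε, hε, hqε⟩ : ∃ ε : ℤ, twistedCotCubeSum q = ε * I / 3 ∧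
      (q = 1 ∧ ε = 1 ∨ q = 2 ∧ ε = -1) := by
    rcases mem_insert.1 hq with rfl | hq
    · exact ⟨1, twistedCotCubeSum_one, .inl ⟨rfl, rfl⟩⟩
    · rw [mem_singleton.1 hq]
      exact ⟨-1, twistedCotCubeSum_two, .inr ⟨rfl, rfl⟩⟩
  rw [← not_or, lensRatio_eq_exp q s ε hε, ← Nat.cast_ofNat (R := ℂ) (n := 18),
    Complex.exp_int_mul_pi_mul_I_div_eq_one_or_eq_neg_one_iff _ (by norm_num)]
  simp only [mem_insert, mem_singleton] at hs
  rcases hqε with ⟨rfl, rfl⟩ | ⟨rfl, rfl⟩ <;> rcases hs with rfl | rfl | rfl <;> decide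
end
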